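/- Let T > 0. Let x^n, x : [0,T] → ℝ be continuous with sup_{t ∈ [0,T]} |x^n(t) − x(t)| → 0 as n → ∞. Let k^n, k be Stieltjes functions with sup_n (k^n(T) − k^n(0)) < ∞, and let Q ⊆ [0,T) be a set of Lebesgue measure zero with 0 ∉ Q such that k^n(t) → k(t) as n → ∞ for every t ∈ [0,T] ∖ Q. Then ∫_{(0,T]} |x(r)| μ_k(dr) ≤ liminf_{n → ∞} ∫_{(0,T]} |x^n(r)| μ_{k^n}(dr). -/

import Mathlib

/-!
Pick a partition `0 = t₀ ≤ ⋯ ≤ tₘ = T` of small mesh whose points avoid `Q`; this is possible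
because a null set has dense complement. On such a partition `∫ |x| dk` differs from the
Riemann–Stieltjes sum `∑ |x(tᵢ₊₁)| (k(tᵢ₊₁) - k(tᵢ))` by at most `ε (k(T) - k(0))`, and for large
`n` the integral `∫ |xⁿ| dkⁿ` differs from the corresponding `kⁿ`-sum by at most
`2ε (kⁿ(T) - kⁿ(0))`. Since `kⁿ → k` at every `tᵢ`, the `kⁿ`-sums converge to the `k`-sum; the
two-sided estimate also bounds the integrals above, so their `liminf` is not a junk value.
Finally let `ε → 0`.
-/

open Filter Topology MeasureTheory Set

theorem exists_partition_mesh_lt_of_volume_eq_zero {Q : Set ℝ} (hQ : volume Q = 0) {a b δ : ℝ}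
    (hab : a < b) (hδ : 0 < δ) (ha : a ∉ Q) (hb : b ∉ Q) :
    ∃ (m : ℕ) (t : ℕ → ℝ), Monotone t ∧ t 0 = a ∧ t m = b ∧
      (∀ i < m, t (i + 1) - t i < δ) ∧ ∀ i, t i ∈ Icc a b \ Q := by
  have hdense : Dense Qᶜ := Measure.dense_of_ae (measure_eq_zero_iff_ae_notMem.mp hQ)
  obtain ⟨m, hm⟩ := exists_nat_gt (3 * (b - a) / (2 * δ))
  have hm0 : (0 : ℝ) < m := lt_trans (by have := sub_pos.2 hab; positivity) hm
  have hm1 : 0 < m := by exact_mod_cast hm0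
  set h := (b - a) / m with hh
  have hh0 : 0 < h := div_pos (sub_pos.2 hab) hm0
  have hmh : m * h = b - a := by rw [hh]; field_simp
  have hmesh : 3 * h / 2 < δ := by
    rw [div_lt_iff₀ (by positivity)] at hm
    nlinarith
  -- interior points lie in `(a + i h - h/2, a + i h)`, so the mesh is at most `3h/2 < δ`
  choose s hsQ hs_gt hs_lt using fun i : ℕ =>
    hdense.exists_between (show a + i * h - h / 2 < a + i * h by linarith)
  set t : ℕ → ℝ := fun i => if i = 0 then a else if i < m then s i else b with ht
  have htail : ∀ i, m ≤ i → t i = b := fun i hi => by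
    simp only [ht, if_neg (show i ≠ 0 by omega), if_neg (not_lt.2 hi)]
  have hwindow : ∀ i ≤ m, a + i * h - h / 2 ≤ t i ∧ t i ≤ a + i * h := by
    intro i hi
    rcases Nat.eq_zero_or_pos i with rfl | hi0
    · simp only [ht, if_pos rfl, Nat.cast_zero]; constructor <;> linarith
    rcases hi.lt_or_eq with him | rfl
    · simp only [ht, if_neg hi0.ne', if_pos him]
      exact ⟨(hs_gt i).le, (hs_lt i).le⟩
    · rw [htail i le_rfl]; constructor <;> linarith
  have hmono : Monotone t := monotone_nat_of_le_succ fun i => by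
    by_cases hi : i < m
    · have := (hwindow i hi.le).2
      have := (hwindow (i + 1) hi).1
      push_cast at *
      linarith
    · rw [htail i (not_lt.1 hi), htail (i + 1) (by omega)]
  refine ⟨m, t, hmono, if_pos rfl, htail m le_rfl, fun i hi => ?_, fun i => ⟨?_, ?_⟩⟩
  · have := (hwindow i hi.le).1
    have := (hwindow (i + 1) hi).2
    push_cast at *
    linarith
  · exact ⟨hmono (Nat.zero_le i), (hmono (le_max_left i m)).trans (htail _ (le_max_right i m)).le⟩
  · simp only [ht]
    split_ifs
    exacts [ha, hsQ i, hb]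

theorem exists_partition_abs_sub_le_of_volume_eq_zero {Q : Set ℝ} (hQ : volume Q = 0)
    {a b ε : ℝ} (hab : a < b) (hε : 0 < ε) (ha : a ∉ Q) (hb : b ∉ Q) {g : ℝ → ℝ}
    (hg : ContinuousOn g (Icc a b)) :
    ∃ (m : ℕ) (t : ℕ → ℝ), Monotone t ∧ t 0 = a ∧ t m = b ∧ (∀ i, t i ∈ Icc a b \ Q) ∧
      ∀ i < m, ∀ r ∈ Ioc (t i) (t (i + 1)), |g r - g (t (i + 1))| ≤ ε := by
  obtain ⟨δ, hδ, hgδ⟩ := Metric.uniformContinuousOn_iff.1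
    (isCompact_Icc.uniformContinuousOn_of_continuous hg) ε hε
  obtain ⟨m, t, ht, ht0, htm, hmesh, htQ⟩ :=
    exists_partition_mesh_lt_of_volume_eq_zero hQ hab hδ ha hb
  refine ⟨m, t, ht, ht0, htm, htQ, fun i hi r hr => ?_⟩
  have hr' : r ∈ Icc a b := ⟨(htQ i).1.1.trans hr.1.le, hr.2.trans (htQ (i + 1)).1.2⟩
  rw [← Real.dist_eq]
  refine (hgδ r hr' _ (htQ (i + 1)).1 ?_).le
  rw [Real.dist_eq, abs_lt]
  constructor <;> linarith [hr.1, hr.2, hmesh i hi]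

namespace StieltjesFunction

theorem measureReal_Ioc (f : StieltjesFunction ℝ) {a b : ℝ} (hab : a ≤ b) :
    f.measure.real (Ioc a b) = f b - f a := by
  rw [measureReal_def, f.measure_Ioc, ENNReal.toReal_ofReal (sub_nonneg.2 (f.mono hab))]

theorem abs_setIntegral_Ioc_sub_le (f : StieltjesFunction ℝ) {g : ℝ → ℝ} {a b c η : ℝ}
    (hab : a ≤ b) (hg : IntegrableOn g (Ioc a b) f.measure)
    (hgc : ∀ r ∈ Ioc a b, |g r - c| ≤ η) :
    |∫ r in Ioc a b, g r ∂f.measure - c * (f b - f a)| ≤ η * (f b - f a) := by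
  have hfin : f.measure (Ioc a b) < ⊤ := by rw [f.measure_Ioc]; exact ENNReal.ofReal_lt_top
  have hconst : ∫ r in Ioc a b, c ∂f.measure = c * (f b - f a) := by
    rw [setIntegral_const, f.measureReal_Ioc hab, smul_eq_mul, mul_comm]
  rw [← hconst, ← integral_sub hg (integrableOn_const hfin.ne), ← f.measureReal_Ioc hab]
  exact norm_setIntegral_le_of_norm_le_const (f := fun r => g r - c) hfin hgc

theorem abs_setIntegral_Ioc_sub_sum_le (f : StieltjesFunction ℝ) {g : ℝ → ℝ} {t c : ℕ → ℝ}
    {η : ℝ} (ht : Monotone t) :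
    ∀ {m : ℕ}, IntegrableOn g (Ioc (t 0) (t m)) f.measure →
      (∀ i < m, ∀ r ∈ Ioc (t i) (t (i + 1)), |g r - c i| ≤ η) →
      |∫ r in Ioc (t 0) (t m), g r ∂f.measure -
          ∑ i ∈ Finset.range m, c i * (f (t (i + 1)) - f (t i))| ≤ η * (f (t m) - f (t 0))
  | 0, _, _ => by simp
  | m + 1, hg, hgc => by
    have hsplit : Ioc (t 0) (t (m + 1)) = Ioc (t 0) (t m) ∪ Ioc (t m) (t (m + 1)) :=
      (Ioc_union_Ioc_eq_Ioc (ht (Nat.zero_le m)) (ht m.le_succ)).symm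
    rw [hsplit] at hg
    have hinit := f.abs_setIntegral_Ioc_sub_sum_le ht (hg.mono_set subset_union_left)
      fun i hi => hgc i (hi.trans m.lt_succ_self)
    have hlast := f.abs_setIntegral_Ioc_sub_le (ht m.le_succ) (hg.mono_set subset_union_right)
      (hgc m m.lt_succ_self)
    rw [hsplit, setIntegral_union (Ioc_disjoint_Ioc_of_le le_rfl) measurableSet_Ioc
      (hg.mono_set subset_union_left) (hg.mono_set subset_union_right), Finset.sum_range_succ]
    calc _ = |(∫ r in Ioc (t 0) (t m), g r ∂f.measure -
            ∑ i ∈ Finset.range m, c i * (f (t (i + 1)) - f (t i))) +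
          (∫ r in Ioc (t m) (t (m + 1)), g r ∂f.measure - c m * (f (t (m + 1)) - f (t m)))| := by
          congr 1; ring
      _ ≤ _ := (abs_add_le _ _).trans (add_le_add hinit hlast)
      _ = _ := by ring

end StieltjesFunction

theorem le_liminf_of_abs_sub_le {ι : Type*} {l : Filter ι} [l.NeBot] {u v w : ι → ℝ} {V W : ℝ}
    (hv : Tendsto v l (𝓝 V)) (hw : Tendsto w l (𝓝 W)) (huv : ∀ᶠ n in l, |u n - v n| ≤ w n) :
    V - W ≤ liminf u l := by
  have hlow : Tendsto (fun n => v n - w n) l (𝓝 (V - W)) := hv.sub hw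
  have hup : IsBoundedUnder (· ≤ ·) l u :=
    (hv.add hw).isBoundedUnder_le.mono_le (huv.mono fun n hn => by linarith [(abs_le.1 hn).2])
  rw [← hlow.liminf_eq]
  exact liminf_le_liminf (huv.mono fun n hn => by linarith [(abs_le.1 hn).1])
    hlow.isBoundedUnder_ge hup.isCoboundedUnder_ge

theorem setIntegral_le_liminf_add_of_partition {a b ε : ℝ} {gn : ℕ → ℝ → ℝ} {g : ℝ → ℝ}
    {kn : ℕ → StieltjesFunction ℝ} {k : StieltjesFunction ℝ} {m : ℕ} {t : ℕ → ℝ}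
    (ht : Monotone t) (ht0 : t 0 = a) (htm : t m = b)
    (hgn : ∀ n, IntegrableOn (gn n) (Ioc a b) (kn n).measure)
    (hg : IntegrableOn g (Ioc a b) k.measure)
    (hgu : ∀ᶠ n in atTop, ∀ r ∈ Ioc a b, |gn n r - g r| ≤ ε)
    (hosc : ∀ i < m, ∀ r ∈ Ioc (t i) (t (i + 1)), |g r - g (t (i + 1))| ≤ ε)
    (hkconv : ∀ i ≤ m, Tendsto (fun n => kn n (t i)) atTop (𝓝 (k (t i)))) :
    ∫ r in Ioc a b, g r ∂k.measure ≤
      liminf (fun n => ∫ r in Ioc a b, gn n r ∂(kn n).measure) atTop + 3 * ε * (k b - k a) := by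
  subst ht0 htm
  set S : StieltjesFunction ℝ → ℝ := fun f =>
    ∑ i ∈ Finset.range m, g (t (i + 1)) * (f (t (i + 1)) - f (t i))
  have hk : |∫ r in Ioc (t 0) (t m), g r ∂k.measure - S k| ≤ ε * (k (t m) - k (t 0)) :=
    k.abs_setIntegral_Ioc_sub_sum_le ht hg hosc
  have hkn : ∀ᶠ n in atTop, |∫ r in Ioc (t 0) (t m), gn n r ∂(kn n).measure - S (kn n)| ≤
      2 * ε * (kn n (t m) - kn n (t 0)) := by
    filter_upwards [hgu] with n hn
    refine (kn n).abs_setIntegral_Ioc_sub_sum_le ht (hgn n) fun i hi r hr => ?_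
    have hr' : r ∈ Ioc (t 0) (t m) := Ioc_subset_Ioc (ht (Nat.zero_le i)) (ht hi) hr
    calc |gn n r - g (t (i + 1))| ≤ |gn n r - g r| + |g r - g (t (i + 1))| := abs_sub_le _ _ _
      _ ≤ ε + ε := add_le_add (hn r hr') (hosc i hi r hr)
      _ = 2 * ε := by ring
  have hS : Tendsto (fun n => S (kn n)) atTop (𝓝 (S k)) :=
    tendsto_finsetSum _ fun i hi => ((hkconv (i + 1) (Finset.mem_range.1 hi)).sub
      (hkconv i (Finset.mem_range.1 hi).le)).const_mul _
  have hvar := ((hkconv m le_rfl).sub (hkconv 0 (Nat.zero_le m))).const_mul (2 * ε)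
  linarith [le_liminf_of_abs_sub_le hS hvar hkn, (abs_le.1 hk).2]

theorem helly_bray_liminf_abs_general (T : ℝ) (hT : 0 < T)
    (xn : ℕ → ℝ → ℝ) (x : ℝ → ℝ)
    (hxnc : ∀ n, ContinuousOn (xn n) (Set.Icc 0 T)) (hxc : ContinuousOn x (Set.Icc 0 T))
    (hxu : TendstoUniformlyOn xn x atTop (Set.Icc 0 T))
    (kn : ℕ → StieltjesFunction ℝ) (k : StieltjesFunction ℝ)
    (Q : Set ℝ) (hQsub : Q ⊆ Set.Ico 0 T) (hQ0 : (0 : ℝ) ∉ Q)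
    (hQnull : MeasureTheory.volume Q = 0)
    (hkconv : ∀ t ∈ Set.Icc (0 : ℝ) T \ Q, Tendsto (fun n => kn n t) atTop (nhds (k t))) :
    (∫ r in Set.Ioc (0 : ℝ) T, |x r| ∂k.measure) ≤
      Filter.liminf (fun n => ∫ r in Set.Ioc (0 : ℝ) T, |xn n r| ∂(kn n).measure) atTop := by
  set L := liminf (fun n => ∫ r in Ioc 0 T, |xn n r| ∂(kn n).measure) atTop
  have key : ∀ ε > 0, ∫ r in Ioc 0 T, |x r| ∂k.measure ≤ L + 3 * ε * (k T - k 0) := by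
    intro ε hε
    obtain ⟨m, t, ht, ht0, htm, htQ, hosc⟩ := exists_partition_abs_sub_le_of_volume_eq_zero
      hQnull hT hε hQ0 (fun hTQ => (hQsub hTQ).2.false) hxc.abs
    refine setIntegral_le_liminf_add_of_partition ht ht0 htm
      (fun n => (hxnc n).abs.integrableOn_Icc.mono_set Ioc_subset_Icc_self)
      (hxc.abs.integrableOn_Icc.mono_set Ioc_subset_Icc_self) ?_ hosc
      fun i _ => hkconv _ (htQ i)
    filter_upwards [Metric.tendstoUniformlyOn_iff.1 hxu ε hε] with n hn r hr
    have hclose := hn r (Ioc_subset_Icc_self hr)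
    rw [dist_comm, Real.dist_eq] at hclose
    exact (abs_abs_sub_abs_le_abs_sub _ _).trans hclose.le
  have hlim : Tendsto (fun ε : ℝ => L + 3 * ε * (k T - k 0)) (𝓝[>] 0) (𝓝 L) := by
    refine tendsto_nhdsWithin_of_tendsto_nhds ?_
    simpa using (((tendsto_id (x := 𝓝 (0 : ℝ))).const_mul 3).mul_const (k T - k 0)).const_add L
  exact ge_of_tendsto hlim (eventually_nhdsWithin_of_forall key)

/-- Fatou-type lower semicontinuity in the Helly–Bray setting: if `xⁿ → x` uniformly on
`[0,T]` (`xⁿ, x` continuous), the Stieltjes functions `kⁿ` have uniformly bounded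
variation on `[0,T]`, and `kⁿ(t) → k(t)` for all `t ∈ [0,T]` outside a Lebesgue-null
set `Q ⊆ [0,T)` with `0 ∉ Q`, then
`∫_{(0,T]} |x| dk ≤ liminf_n ∫_{(0,T]} |xⁿ| dkⁿ`. -/
theorem helly_bray_liminf_abs (T : ℝ) (hT : 0 < T)
    (xn : ℕ → ℝ → ℝ) (x : ℝ → ℝ)
    (hxnc : ∀ n, ContinuousOn (xn n) (Set.Icc 0 T)) (hxc : ContinuousOn x (Set.Icc 0 T))
    (hxu : TendstoUniformlyOn xn x atTop (Set.Icc 0 T))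
    (kn : ℕ → StieltjesFunction ℝ) (k : StieltjesFunction ℝ)
    (hbd : ∃ M : ℝ, ∀ n, kn n T - kn n 0 ≤ M)
    (Q : Set ℝ) (hQsub : Q ⊆ Set.Ico 0 T) (hQ0 : (0 : ℝ) ∉ Q)
    (hQnull : MeasureTheory.volume Q = 0)
    (hkconv : ∀ t ∈ Set.Icc (0 : ℝ) T \ Q, Tendsto (fun n => kn n t) atTop (nhds (k t))) :
    (∫ r in Set.Ioc (0 : ℝ) T, |x r| ∂k.measure) ≤
      Filter.liminf (fun n => ∫ r in Set.Ioc (0 : ℝ) T, |xn n r| ∂(kn n).measure) atTop :=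
  helly_bray_liminf_abs_general T hT xn x hxnc hxc hxu kn k Q hQsub hQ0 hQnull hkconv
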